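/- For a binary matroid M and ℓ ≥ 4, M is ℓ-chordal if and only if the Orlik–Solomon algebra OS(M) is (ℓ−2)-adic, i.e., ℑ(𝔠) = ℑ(𝔠_{ℓ−1}). -/

import Mathlib

/-!
If `i` is a chord of `C = C₁ Δ C₂`, write `e_{C₁} = ±e_A e_i`, `e_{C₂} = ±e_i e_B` and
`e_C = ±e_A e_B`. The Leibniz rule for `∂` gives
`∂(e_A e_B) = ∂e_A · ∂(e_i e_B) + ∂(e_A e_i) · ∂e_B`, so `∂e_C` lies in the ideal generated by
`∂e_{C₁}` and `∂e_{C₂}`, and simplicity makes `C₁, C₂` strictly smaller than `C`. Induction on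
`|C|` then shows that an `ℓ`-chordal `M` has `ℑ(𝔠) = ℑ(𝔠_{ℓ-1})`.

Conversely, let `C` be a chordless circuit with `|C| ≥ ℓ`. In a simple binary matroid every other
circuit `D` has `|D \ C| ≥ 2` (if `D \ C = {a}`, then `a` is a chord). The algebra endomorphism
killing the generators outside `C` therefore kills `∂e_D` for every `D ∈ 𝔠_{ℓ-1}`, hence all of
`ℑ(𝔠_{ℓ-1})`, while it fixes `∂e_C ≠ 0`.
-/

open ExteriorAlgebra

/-- The Grassmann algebra over `K` on generators `e 0, ..., e (n-1)`. -/
abbrev Grass (K : Type) [Field K] (n : ℕ) := ExteriorAlgebra K (Fin n → K)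

/-- The generator `e i`. -/
noncomputable def gen (K : Type) [Field K] (n : ℕ) (i : Fin n) : Grass K n :=
  ExteriorAlgebra.ι K (Pi.single i 1)

/-- The monomial associated to a list of indices. -/
noncomputable def monList (K : Type) [Field K] (n : ℕ) (l : List (Fin n)) : Grass K n :=
  (l.map (gen K n)).prod

/-- The monomial `e_X` of a subset `X ⊆ [n]`, factors in increasing order. -/
noncomputable def mon (K : Type) [Field K] (n : ℕ) (X : Finset (Fin n)) : Grass K n :=
  monList K n (X.sort (· ≤ ·))

/-- The degree `-1` antiderivation `∂` on the Grassmann algebra with `∂ (e i) = 1`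
(left contraction with the covector sending each generator to `1`). -/
noncomputable def bd (K : Type) [Field K] (n : ℕ) : Grass K n →ₗ[K] Grass K n :=
  CliffordAlgebra.contractLeft (∑ i : Fin n, LinearMap.proj i)

/-- The two-sided ideal `ℑ(𝔛)` generated by the differentials `∂ e_Y`, `Y ∈ 𝔛`. -/
noncomputable def OSIdeal (K : Type) [Field K] (n : ℕ) (X : Set (Finset (Fin n))) :
    TwoSidedIdeal (Grass K n) :=
  TwoSidedIdeal.span ((fun Y => bd K n (mon K n Y)) '' X)

/-- A circuit of a matroid: a minimal dependent (finite) set. -/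
def IsCircuit {α : Type} [DecidableEq α] (M : Matroid α) (C : Finset α) : Prop :=
  M.Dep (C : Set α) ∧ ∀ D : Finset α, D ⊂ C → ¬ M.Dep (D : Set α)

/-- `i` is a chord of the circuit `C`, witnessed by circuits `C₁, C₂` with
`C₁ ∩ C₂ = {i}` and `C = C₁ Δ C₂`. -/
def IsChord {α : Type} [DecidableEq α] (M : Matroid α) (C : Finset α) (i : α) : Prop :=
  ∃ C₁ C₂ : Finset α, IsCircuit M C₁ ∧ IsCircuit M C₂ ∧ C₁ ∩ C₂ = {i} ∧ C = symmDiff C₁ C₂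

def HasChord {α : Type} [DecidableEq α] (M : Matroid α) (C : Finset α) : Prop :=
  ∃ i, IsChord M C i

/-- `M` is `ℓ`-chordal: every circuit with at least `ℓ` elements has a chord. -/
def Chordal {α : Type} [DecidableEq α] (M : Matroid α) (l : ℕ) : Prop :=
  ∀ C : Finset α, IsCircuit M C → l ≤ C.card → HasChord M C

/-- `M` is simple: every circuit has at least 3 elements. -/
def SimpleM {α : Type} [DecidableEq α] (M : Matroid α) : Prop :=
  ∀ C : Finset α, IsCircuit M C → 3 ≤ C.card

/-- `M` is binary: the symmetric difference of two distinct circuits contains a circuit. -/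
def BinaryM {α : Type} [DecidableEq α] (M : Matroid α) : Prop :=
  ∀ C D : Finset α, IsCircuit M C → IsCircuit M D → C ≠ D →
    ∃ C', IsCircuit M C' ∧ C' ⊆ symmDiff C D

/-- The set `𝔠` of circuits of `M`. -/
def Circuits {α : Type} [DecidableEq α] (M : Matroid α) : Set (Finset α) :=
  {C | IsCircuit M C}

/-- The set `𝔠_k` of circuits of `M` with at most `k` elements. -/
def CircuitsLe {α : Type} [DecidableEq α] (M : Matroid α) (k : ℕ) : Set (Finset α) :=
  {C | IsCircuit M C ∧ C.card ≤ k}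

section Grassmann

variable {K : Type} [Field K] {n : ℕ}

lemma bd_gen_mul (i : Fin n) (x : Grass K n) :
    bd K n (gen K n i * x) = x - gen K n i * bd K n x := by
  rw [bd, gen, CliffordAlgebra.contractLeft_ι_mul]
  simp

lemma bd_one : bd K n 1 = 0 := CliffordAlgebra.contractLeft_one _ _

lemma bd_gen (i : Fin n) : bd K n (gen K n i) = 1 := by
  simpa [bd_one] using bd_gen_mul (K := K) i 1

lemma bd_mul (x y : Grass K n) :
    bd K n (x * y) = bd K n x * y + CliffordAlgebra.involute x * bd K n y := by
  induction x using CliffordAlgebra.induction generalizing y with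
  | algebraMap r =>
    rw [bd, CliffordAlgebra.contractLeft_algebraMap_mul, CliffordAlgebra.contractLeft_algebraMap,
      zero_mul, zero_add, AlgHom.commutes]
  | ι v =>
    rw [bd, CliffordAlgebra.contractLeft_ι_mul, CliffordAlgebra.contractLeft_ι,
      CliffordAlgebra.involute_ι, ← bd, Algebra.smul_def, neg_mul, sub_eq_add_neg]
  | mul a b ha hb =>
    rw [mul_assoc, ha, hb, ha b, map_mul]
    noncomm_ring
  | add a b ha hb =>
    rw [add_mul, map_add, map_add, map_add, ha, hb]
    noncomm_ring

lemma bd_mul_split (i : Fin n) (a b : Grass K n) :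
    bd K n (a * b) = bd K n a * bd K n (gen K n i * b) + bd K n (a * gen K n i) * bd K n b := by
  rw [bd_gen_mul, bd_mul a (gen K n i), bd_gen, bd_mul a b]
  noncomm_ring

lemma monList_cons (j : Fin n) (t : List (Fin n)) :
    monList K n (j :: t) = gen K n j * monList K n t := by
  simp [monList]

lemma monList_append (l₁ l₂ : List (Fin n)) :
    monList K n (l₁ ++ l₂) = monList K n l₁ * monList K n l₂ := by
  simp [monList]

lemma monList_singleton (i : Fin n) : monList K n [i] = gen K n i := by
  simp [monList]

lemma gen_mul_self (i : Fin n) : gen K n i * gen K n i = 0 := ι_sq_zero _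

lemma gen_mul_gen_eq_neg (i j : Fin n) : gen K n i * gen K n j = -(gen K n j * gen K n i) :=
  eq_neg_of_add_eq_zero_left (ι_add_mul_swap _ _)

lemma monList_eq_or_eq_neg_of_perm {l l' : List (Fin n)} (h : l.Perm l') :
    monList K n l = monList K n l' ∨ monList K n l = -monList K n l' := by
  induction h with
  | nil => exact Or.inl rfl
  | cons x _ ih => rcases ih with ih | ih <;> simp [monList_cons, ih]
  | swap x y l =>
    right
    simp only [monList_cons, ← mul_assoc, gen_mul_gen_eq_neg y x, neg_mul]
  | trans _ _ ih₁ ih₂ => rcases ih₁ with ih₁ | ih₁ <;> rcases ih₂ with ih₂ | ih₂ <;> simp [ih₁, ih₂]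

lemma contractLeft_proj_monList_of_notMem {j : Fin n} {l : List (Fin n)} (h : j ∉ l) :
    CliffordAlgebra.contractLeft (LinearMap.proj j) (monList K n l) = 0 := by
  induction l with
  | nil => exact CliffordAlgebra.contractLeft_one _ _
  | cons a t ih =>
    rw [List.mem_cons, not_or] at h
    rw [monList_cons, gen, CliffordAlgebra.contractLeft_ι_mul, ← gen, ih h.2]
    simp [h.1]

lemma monList_ne_zero {l : List (Fin n)} (hl : l.Nodup) : monList K n l ≠ 0 := by
  induction l with
  | nil => exact one_ne_zero
  | cons a t ih =>
    rw [List.nodup_cons] at hl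
    intro h0
    apply ih hl.2
    have := congrArg (CliffordAlgebra.contractLeft (LinearMap.proj a)) h0
    rw [monList_cons, gen, CliffordAlgebra.contractLeft_ι_mul, ← gen,
      contractLeft_proj_monList_of_notMem hl.1] at this
    simpa using this

lemma bd_monList_ne_zero {l : List (Fin n)} (hl : l.Nodup) (hne : l ≠ []) :
    bd K n (monList K n l) ≠ 0 := by
  obtain ⟨j, t, rfl⟩ := List.exists_cons_of_ne_nil hne
  intro h0
  apply monList_ne_zero (K := K) hl
  have : gen K n j * bd K n (monList K n (j :: t)) = monList K n (j :: t) := by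
    rw [monList_cons, bd_gen_mul, mul_sub, ← mul_assoc, gen_mul_self, zero_mul, sub_zero]
  rw [← this, h0, mul_zero]

lemma bd_mon_ne_zero {X : Finset (Fin n)} (hX : X.Nonempty) : bd K n (mon K n X) ≠ 0 :=
  bd_monList_ne_zero (X.sort_nodup _) (by simpa [← List.toFinset_eq_empty_iff] using hX.ne_empty)

lemma bd_mon_mem_iff {J : TwoSidedIdeal (Grass K n)} {X : Finset (Fin n)} {l : List (Fin n)}
    (hl : l.Nodup) (hX : l.toFinset = X) :
    bd K n (mon K n X) ∈ J ↔ bd K n (monList K n l) ∈ J := by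
  have hperm : (X.sort (· ≤ ·)).Perm l :=
    List.perm_of_nodup_nodup_toFinset_eq (X.sort_nodup _) hl (by rw [Finset.sort_toFinset, hX])
  rcases monList_eq_or_eq_neg_of_perm (K := K) hperm with h | h <;>
    simp [mon, h, neg_mem_iff]

end Grassmann

section OSIdeal

variable {K : Type} [Field K] {n : ℕ}

lemma bd_mon_mem_OSIdeal {X : Set (Finset (Fin n))} {Y : Finset (Fin n)} (h : Y ∈ X) :
    bd K n (mon K n Y) ∈ OSIdeal K n X :=
  TwoSidedIdeal.subset_span ⟨Y, h, rfl⟩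

lemma OSIdeal_mono {X Y : Set (Finset (Fin n))} (h : X ⊆ Y) : OSIdeal K n X ≤ OSIdeal K n Y :=
  TwoSidedIdeal.span_mono (Set.image_mono h)

lemma OSIdeal_le_iff {X : Set (Finset (Fin n))} {I : TwoSidedIdeal (Grass K n)} :
    OSIdeal K n X ≤ I ↔ ∀ Y ∈ X, bd K n (mon K n Y) ∈ I := by
  rw [OSIdeal, TwoSidedIdeal.span_le, Set.image_subset_iff]
  rfl

lemma bd_monList_append_mem {J : TwoSidedIdeal (Grass K n)} (i : Fin n) (la lb : List (Fin n))
    (ha : bd K n (monList K n (la ++ [i])) ∈ J) (hb : bd K n (monList K n (i :: lb)) ∈ J) :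
    bd K n (monList K n (la ++ lb)) ∈ J := by
  rw [monList_append, monList_singleton] at ha
  rw [monList_cons] at hb
  rw [monList_append, bd_mul_split i]
  exact J.add_mem (J.mul_mem_left _ _ hb) (J.mul_mem_right _ _ ha)

lemma bd_mon_symmDiff_mem {J : TwoSidedIdeal (Grass K n)} {C₁ C₂ : Finset (Fin n)} {i : Fin n}
    (hi : C₁ ∩ C₂ = {i}) (h₁ : bd K n (mon K n C₁) ∈ J) (h₂ : bd K n (mon K n C₂) ∈ J) :
    bd K n (mon K n (symmDiff C₁ C₂)) ∈ J := by
  have hmem : ∀ x, x ∈ C₁ → x ∈ C₂ → x = i := fun x hx₁ hx₂ => by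
    simpa [hi] using Finset.mem_inter.2 ⟨hx₁, hx₂⟩
  have hi₁ : i ∈ C₁ := (Finset.mem_inter.1 (hi ▸ Finset.mem_singleton_self i)).1
  have hi₂ : i ∈ C₂ := (Finset.mem_inter.1 (hi ▸ Finset.mem_singleton_self i)).2
  rw [bd_mon_mem_iff (l := (C₁.erase i).toList ++ [i])
    (by simp +contextual [List.nodup_append, Finset.nodup_toList])
    (by simp [Finset.insert_erase hi₁])] at h₁
  rw [bd_mon_mem_iff (l := i :: (C₂.erase i).toList)
    (by simp [Finset.nodup_toList])
    (by simp [Finset.insert_erase hi₂])] at h₂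
  rw [bd_mon_mem_iff (l := (C₁.erase i).toList ++ (C₂.erase i).toList)
    (by simp [List.nodup_append, Finset.nodup_toList]; grind)
    (by ext x; simp [Finset.mem_symmDiff]; grind)]
  exact bd_monList_append_mem i _ _ h₁ h₂

end OSIdeal

section KillOutside

variable {K : Type} [Field K] {n : ℕ} (C : Finset (Fin n))

noncomputable def projOnto : (Fin n → K) →ₗ[K] (Fin n → K) :=
  LinearMap.pi fun j => if j ∈ C then LinearMap.proj j else 0

noncomputable def killOutside : Grass K n →ₐ[K] Grass K n :=
  ExteriorAlgebra.map (projOnto C)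

lemma killOutside_gen (i : Fin n) :
    killOutside C (gen K n i) = if i ∈ C then gen K n i else 0 := by
  have : projOnto (K := K) C (Pi.single i 1) = if i ∈ C then Pi.single i 1 else 0 := by
    ext j
    by_cases hi : i ∈ C <;> by_cases hij : j = i <;> by_cases hj : j ∈ C <;>
      simp_all [projOnto]
  rw [killOutside, gen, ExteriorAlgebra.map_apply_ι, this]
  split_ifs <;> simp

lemma killOutside_monList_of_subset {l : List (Fin n)} (h : ∀ j ∈ l, j ∈ C) :
    killOutside C (monList K n l) = monList K n l := by
  induction l with
  | nil => exact map_one _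
  | cons a t ih =>
    simp only [List.mem_cons, forall_eq_or_imp] at h
    rw [monList_cons, map_mul, killOutside_gen, if_pos h.1, ih h.2]

lemma killOutside_monList_of_notMem {l : List (Fin n)} {j : Fin n} (hj : j ∈ l) (hjC : j ∉ C) :
    killOutside C (monList K n l) = 0 := by
  induction l with
  | nil => simp at hj
  | cons a t ih =>
    rw [monList_cons, map_mul, killOutside_gen]
    split_ifs with ha
    · rw [ih ((List.mem_cons.1 hj).resolve_left (by rintro rfl; exact hjC ha)), mul_zero]
    · rw [zero_mul]

lemma killOutside_bd_monList_of_subset {l : List (Fin n)} (h : ∀ j ∈ l, j ∈ C) :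
    killOutside C (bd K n (monList K n l)) = bd K n (monList K n l) := by
  induction l with
  | nil => rw [monList, List.map_nil, List.prod_nil, bd_one, map_zero]
  | cons a t ih =>
    simp only [List.mem_cons, forall_eq_or_imp] at h
    rw [monList_cons, bd_gen_mul, map_sub, map_mul, killOutside_gen, if_pos h.1,
      killOutside_monList_of_subset C h.2, ih h.2]

/-- Each monomial of `∂ e_l` omits a single factor of `e_l`, so it keeps one from outside `C`. -/
lemma killOutside_bd_monList_eq_zero {l : List (Fin n)} (h : 2 ≤ l.countP (· ∉ C)) :
    killOutside C (bd K n (monList K n l)) = 0 := by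
  induction l with
  | nil => simp at h
  | cons a t ih =>
    obtain ⟨j, hj, hjC⟩ : ∃ j ∈ t, j ∉ C := by
      have : 0 < t.countP (· ∉ C) := by grind
      simpa using List.countP_pos_iff.1 this
    rw [monList_cons, bd_gen_mul, map_sub, map_mul, killOutside_gen,
      killOutside_monList_of_notMem C hj hjC]
    split_ifs with ha
    · rw [ih (by simpa [List.countP_cons, ha] using h), mul_zero, sub_zero]
    · rw [zero_mul, sub_zero]

lemma killOutside_bd_mon_eq_zero {Y : Finset (Fin n)} (h : 2 ≤ (Y \ C).card) :
    killOutside C (bd K n (mon K n Y)) = 0 := by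
  apply killOutside_bd_monList_eq_zero
  rwa [← Multiset.coe_countP, Finset.sort_eq, Multiset.countP_eq_card_filter, ← Finset.filter_val,
    Finset.card_val, ← Finset.sdiff_eq_filter]

lemma killOutside_bd_mon_self : killOutside C (bd K n (mon K n C)) = bd K n (mon K n C) :=
  killOutside_bd_monList_of_subset C fun _ => (Finset.mem_sort _).1

end KillOutside

section Matroid

variable {α : Type} [DecidableEq α] {M : Matroid α}

lemma IsCircuit.nonempty {C : Finset α} (hC : IsCircuit M C) : C.Nonempty :=
  Finset.coe_nonempty.1 hC.1.nonempty

lemma IsCircuit.eq_of_subset {C D : Finset α} (hC : IsCircuit M C) (hD : IsCircuit M D)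
    (h : D ⊆ C) : D = C :=
  of_not_not fun hne => hC.2 D (Finset.ssubset_iff_subset_ne.2 ⟨h, hne⟩) hD.1

lemma BinaryM.eq_symmDiff_of_symmDiff_subset (hb : BinaryM M) {C D₁ D₂ : Finset α}
    (hC : IsCircuit M C) (hD₁ : IsCircuit M D₁) (hD₂ : IsCircuit M D₂) (hne : D₁ ≠ D₂)
    (h : symmDiff D₁ D₂ ⊆ C) : C = symmDiff D₁ D₂ := by
  obtain ⟨E, hE, hEsub⟩ := hb D₁ D₂ hD₁ hD₂ hne
  refine subset_antisymm ?_ h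
  rw [← hC.eq_of_subset hE (hEsub.trans h)]
  exact hEsub

/-- A circuit `C'` inside `C Δ D` must contain `a`, and then `C = D Δ C'`. -/
lemma hasChord_of_sdiff_eq_singleton (hb : BinaryM M) (hs : SimpleM M) {C D : Finset α}
    {a : α} (hC : IsCircuit M C) (hD : IsCircuit M D) (h : D \ C = {a}) : HasChord M C := by
  have hDa : ∀ x ∈ D, x ∉ C ↔ x = a := fun x hx => by
    simpa [hx] using congrArg (x ∈ ·) h
  have haD : a ∈ D := (Finset.mem_sdiff.1 (h ▸ Finset.mem_singleton_self a)).1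
  have haC : a ∉ C := (Finset.mem_sdiff.1 (h ▸ Finset.mem_singleton_self a)).2
  have hD_card := hs D hD
  obtain ⟨b, hbD, hba⟩ : ∃ b ∈ D, b ≠ a :=
    Finset.exists_mem_ne (by omega) a
  have hbC : b ∈ C := by grind
  obtain ⟨C', hC', hC'sub⟩ := hb C D hC hD (by rintro rfl; exact haC haD)
  have hC'mem : ∀ x ∈ C', (x ∈ C ∧ x ∉ D) ∨ x = a := fun x hx => by
    have := hC'sub hx
    rw [Finset.mem_symmDiff] at this
    grind
  have haC' : a ∈ C' := by
    by_contra haC'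
    have hC'C : C' = C := hC.eq_of_subset hC' fun x hx => by grind
    grind
  have hinter : D ∩ C' = {a} := by
    ext x
    simp only [Finset.mem_inter, Finset.mem_singleton]
    grind
  refine ⟨a, D, C', hD, hC', hinter, hb.eq_symmDiff_of_symmDiff_subset hC hD hC' ?_ ?_⟩
  · rintro rfl
    grind
  · intro x hx
    rw [Finset.mem_symmDiff] at hx
    grind

lemma two_le_card_sdiff_of_not_hasChord (hb : BinaryM M) (hs : SimpleM M) {C D : Finset α}
    (hC : IsCircuit M C) (hno : ¬HasChord M C) (hD : IsCircuit M D) (hne : D ≠ C) :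
    2 ≤ (D \ C).card := by
  by_contra hlt
  interval_cases hcard : (D \ C).card
  · exact hne <| hC.eq_of_subset hD <|
      Finset.sdiff_eq_empty_iff_subset.1 (Finset.card_eq_zero.1 hcard)
  · obtain ⟨a, ha⟩ := Finset.card_eq_one.1 hcard
    exact hno (hasChord_of_sdiff_eq_singleton hb hs hC hD ha)

lemma card_symmDiff_add_two_of_inter_eq_singleton {C₁ C₂ : Finset α} {i : α} (hi : C₁ ∩ C₂ = {i}) :
    (symmDiff C₁ C₂).card + 2 = C₁.card + C₂.card := by
  have hsub : C₁ ∩ C₂ ⊆ C₁ ∪ C₂ := Finset.inter_subset_left.trans Finset.subset_union_left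
  have := Finset.card_union_add_card_inter C₁ C₂
  have := Finset.card_le_card hsub
  rw [symmDiff_eq_sup_sdiff_inf, Finset.sup_eq_union, Finset.inf_eq_inter,
    Finset.card_sdiff_of_subset hsub]
  simp_all only [Finset.card_singleton]
  omega

end Matroid

section Chordal

variable {K : Type} [Field K] {n : ℕ} {M : Matroid (Fin n)} {l : ℕ}

lemma bd_mon_mem_OSIdeal_circuitsLe_of_chordal (hs : SimpleM M) (hch : Chordal M l)
    {C : Finset (Fin n)} (hC : IsCircuit M C) :
    bd K n (mon K n C) ∈ OSIdeal K n (CircuitsLe M (l - 1)) := by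
  induction hcard : C.card using Nat.strong_induction_on generalizing C with
  | _ m ih =>
    by_cases hsmall : C.card ≤ l - 1
    · exact bd_mon_mem_OSIdeal ⟨hC, hsmall⟩
    obtain ⟨i, C₁, C₂, hC₁, hC₂, hi, rfl⟩ := hch C hC (by omega)
    have hcard_eq := card_symmDiff_add_two_of_inter_eq_singleton hi
    have hC₁_card := hs C₁ hC₁
    have hC₂_card := hs C₂ hC₂
    exact bd_mon_symmDiff_mem hi (ih _ (by omega) hC₁ rfl) (ih _ (by omega) hC₂ rfl)

lemma OSIdeal_circuits_eq_of_chordal (hs : SimpleM M) (hch : Chordal M l) :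
    OSIdeal K n (Circuits M) = OSIdeal K n (CircuitsLe M (l - 1)) :=
  le_antisymm (OSIdeal_le_iff.2 fun _ hY => bd_mon_mem_OSIdeal_circuitsLe_of_chordal hs hch hY)
    (OSIdeal_mono fun _ hY => hY.1)

lemma chordal_of_OSIdeal_circuits_eq (hb : BinaryM M) (hs : SimpleM M)
    (hl : 0 < l) (heq : OSIdeal K n (Circuits M) = OSIdeal K n (CircuitsLe M (l - 1))) :
    Chordal M l := by
  intro C hC hCl
  by_contra hno
  have hle : OSIdeal K n (CircuitsLe M (l - 1)) ≤ TwoSidedIdeal.ker (killOutside C) := by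
    refine OSIdeal_le_iff.2 fun Y ⟨hY, hYl⟩ => (TwoSidedIdeal.mem_ker _).2 ?_
    refine killOutside_bd_mon_eq_zero C (two_le_card_sdiff_of_not_hasChord hb hs hC hno hY ?_)
    rintro rfl
    omega
  have hker := (TwoSidedIdeal.mem_ker _).1 (hle (heq ▸ bd_mon_mem_OSIdeal hC))
  rw [killOutside_bd_mon_self] at hker
  exact bd_mon_ne_zero hC.nonempty hker

end Chordal

theorem stmt11_general (K : Type) [Field K] (n : ℕ) (M : Matroid (Fin n))
    (hs : SimpleM M) (hb : BinaryM M) (l : ℕ) (hl : 4 ≤ l) :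
    Chordal M l ↔ OSIdeal K n (Circuits M) = OSIdeal K n (CircuitsLe M (l - 1)) :=
  ⟨OSIdeal_circuits_eq_of_chordal hs, chordal_of_OSIdeal_circuits_eq hb hs (by omega)⟩

/-- a binary matroid `M` is `ℓ`-chordal (`ℓ ≥ 4`) iff `OS(M)` is
`(ℓ-2)`-adic, i.e. `ℑ(𝔠) = ℑ(𝔠_{ℓ-1})`. -/
theorem stmt11 (K : Type) [Field K] (n : ℕ) (M : Matroid (Fin n)) (hE : M.E = Set.univ)
    (hs : SimpleM M) (hb : BinaryM M) (l : ℕ) (hl : 4 ≤ l) :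
    Chordal M l ↔ OSIdeal K n (Circuits M) = OSIdeal K n (CircuitsLe M (l - 1)) :=
  stmt11_general K n M hs hb l hl
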